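/- Order-dependence for incompatible projections: if P and Q are orthogonal projections on a finite-dimensional complex Hilbert space with P Q ≠ Q P, then there exists a unit vector ψ such that ⟨ψ, P Q P ψ⟩ ≠ ⟨ψ, Q P Q ψ⟩. -/

import Mathlib

/-!
If `⟪ψ, PQPψ⟫ = ⟪ψ, QPQψ⟫` for every unit vector, then by homogeneity and complex polarization
`PQP = QPQ`. For idempotents this forces the commutator `C = PQ - QP` to square to zero, and `C`
is skew-symmetric because `P` and `Q` are symmetric, so `‖C x‖² = -⟪x, C² x⟫ = 0`.
-/

open scoped InnerProductSpace

theorem IsIdempotentElem.commutator_mul_self_eq_zero {R : Type*} [Ring R] {p q : R}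
    (hp : IsIdempotentElem p) (hq : IsIdempotentElem q) (h : p * q * p = q * p * q) :
    (p * q - q * p) * (p * q - q * p) = 0 := by
  have hpqpq : p * q * p * q = q * p * q := by rw [h, mul_assoc _ q q, hq.eq]
  have hqpqp : q * p * q * p = p * q * p := by rw [← h, mul_assoc _ p p, hp.eq]
  have hpqqp : p * q * q * p = p * q * p := by rw [mul_assoc p q q, hq.eq]
  have hqppq : q * p * p * q = q * p * q := by rw [mul_assoc q p p, hp.eq]
  simp only [sub_mul, mul_sub, ← mul_assoc]
  rw [hpqpq, hqpqp, hpqqp, hqppq, h]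
  abel

namespace LinearMap

variable {𝕜 E : Type*} [RCLike 𝕜] [NormedAddCommGroup E] [InnerProductSpace 𝕜 E]

theorem IsSymmetric.inner_commutator_left {S T : E →ₗ[𝕜] E} (hS : S.IsSymmetric)
    (hT : T.IsSymmetric) (x y : E) :
    ⟪(S * T - T * S) x, y⟫_𝕜 = -⟪x, (S * T - T * S) y⟫_𝕜 := by
  simp only [sub_apply, Module.End.mul_apply, inner_sub_left, inner_sub_right, neg_sub]
  rw [hS, hT, hT, hS]

theorem eq_zero_of_inner_apply_eq_neg_of_mul_self_eq_zero (C : E →ₗ[𝕜] E)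
    (hC : ∀ x y, ⟪C x, y⟫_𝕜 = -⟪x, C y⟫_𝕜) (hCC : C * C = 0) : C = 0 := by
  ext x
  rw [zero_apply, ← inner_self_eq_zero (𝕜 := 𝕜), hC, ← Module.End.mul_apply, hCC, zero_apply,
    inner_zero_right, neg_zero]

theorem inner_map_self_eq_of_forall_norm_eq_one {S T : E →ₗ[𝕜] E}
    (h : ∀ ψ : E, ‖ψ‖ = 1 → ⟪ψ, S ψ⟫_𝕜 = ⟪ψ, T ψ⟫_𝕜) (ψ : E) :
    ⟪ψ, S ψ⟫_𝕜 = ⟪ψ, T ψ⟫_𝕜 := by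
  rcases eq_or_ne ψ 0 with rfl | hψ
  · simp
  set c : 𝕜 := ((‖ψ‖⁻¹ : ℝ) : 𝕜)
  have hc : c ≠ 0 := by simpa [c] using hψ
  have hscale : ∀ A : E →ₗ[𝕜] E, ⟪c • ψ, A (c • ψ)⟫_𝕜 = c * c * ⟪ψ, A ψ⟫_𝕜 := fun A => by
    rw [map_smul, inner_smul_left, inner_smul_right, RCLike.conj_ofReal, mul_assoc]
  have hunit : ‖c • ψ‖ = 1 := by
    rw [norm_smul, RCLike.norm_ofReal, abs_inv, abs_norm, inv_mul_cancel₀ (norm_ne_zero_iff.2 hψ)]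
  have := h _ hunit
  rwa [hscale, hscale, mul_right_inj' (mul_ne_zero hc hc)] at this

theorem ext_inner_map_of_forall_norm_eq_one {V : Type*} [NormedAddCommGroup V]
    [InnerProductSpace ℂ V] {S T : V →ₗ[ℂ] V}
    (h : ∀ ψ : V, ‖ψ‖ = 1 → ⟪ψ, S ψ⟫_ℂ = ⟪ψ, T ψ⟫_ℂ) : S = T := by
  refine (ext_inner_map S T).1 fun x => ?_
  rw [← inner_conj_symm, inner_map_self_eq_of_forall_norm_eq_one h, inner_conj_symm]

end LinearMap

theorem stmt_18_general {H : Type*} [NormedAddCommGroup H] [InnerProductSpace ℂ H]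
    (P Q : H →ₗ[ℂ] H)
    (hPidem : P ∘ₗ P = P) (hPsa : ∀ x y : H, ⟪P x, y⟫_ℂ = ⟪x, P y⟫_ℂ)
    (hQidem : Q ∘ₗ Q = Q) (hQsa : ∀ x y : H, ⟪Q x, y⟫_ℂ = ⟪x, Q y⟫_ℂ)
    (hne : P ∘ₗ Q ≠ Q ∘ₗ P) :
    ∃ ψ : H, ‖ψ‖ = 1 ∧ ⟪ψ, P (Q (P ψ))⟫_ℂ ≠ ⟪ψ, Q (P (Q ψ))⟫_ℂ := by
  by_contra! hcon
  have hPQP : P * Q * P = Q * P * Q := LinearMap.ext_inner_map_of_forall_norm_eq_one hcon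
  have hCC := IsIdempotentElem.commutator_mul_self_eq_zero hPidem hQidem hPQP
  have hC : P * Q - Q * P = 0 := LinearMap.eq_zero_of_inner_apply_eq_neg_of_mul_self_eq_zero _
    (LinearMap.IsSymmetric.inner_commutator_left hPsa hQsa) hCC
  exact hne (sub_eq_zero.1 hC)

/-- order-dependence for incompatible projections: if `P Q ≠ Q P`, then
some unit vector `ψ` has `⟪ψ, P Q P ψ⟫ ≠ ⟪ψ, Q P Q ψ⟫`. -/
theorem stmt_18 {H : Type*} [NormedAddCommGroup H] [InnerProductSpace ℂ H]
    [FiniteDimensional ℂ H] (P Q : H →ₗ[ℂ] H)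
    (hPidem : P ∘ₗ P = P) (hPsa : ∀ x y : H, ⟪P x, y⟫_ℂ = ⟪x, P y⟫_ℂ)
    (hQidem : Q ∘ₗ Q = Q) (hQsa : ∀ x y : H, ⟪Q x, y⟫_ℂ = ⟪x, Q y⟫_ℂ)
    (hne : P ∘ₗ Q ≠ Q ∘ₗ P) :
    ∃ ψ : H, ‖ψ‖ = 1 ∧ ⟪ψ, P (Q (P ψ))⟫_ℂ ≠ ⟪ψ, Q (P (Q ψ))⟫_ℂ :=
  stmt_18_general P Q hPidem hPsa hQidem hQsa hne
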